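/- arXiv:1807.11892 — 10 statements merged into one kernel-verified Lean document; each statement's English description precedes it below -/
import Mathlib

section
/- The feasible set D = {x : Fin N → ℝ | (∀ i, x i ≥ 0) ∧ (∑ i, x i) < μ} is convex, and the potential function H(x) = (∑ i, w i * Real.log (1 + x i)) − r * (∑ i, x i) − 1/(μ − ∑ i, x i) is strictly concave on D. -/
lemma combo_lt_aux (a b p q μ : ℝ) (ha : 0 ≤ a) (hb : 0 ≤ b) (hab : a + b = 1)
    (hp : p < μ) (hq : q < μ) : a * p + b * q < μ := by
  have hμeq : a * μ + b * μ = μ := by rw [← add_mul, hab, one_mul]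
  rcases ha.eq_or_lt with h | h
  · have hb1 : b = 1 := by linarith
    rw [← h, hb1]; simpa using hq
  · linarith [mul_pos h (sub_pos.2 hp), mul_nonneg hb (sub_pos.2 hq).le]

lemma inv_combo_aux (u v a b : ℝ) (hu : 0 < u) (hv : 0 < v) (ha : 0 < a)
    (hb : 0 < b) (hab : a + b = 1) : 1 / (a * u + b * v) ≤ a / u + b / v := by
  rw [div_add_div _ _ hu.ne' hv.ne', div_le_div_iff₀ (by positivity) (by positivity)]
  have hba : a = 1 - b := by linarith
  subst hba
  nlinarith [mul_nonneg (mul_pos ha hb).le (sq_nonneg (u - v))]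

lemma log_term_ineq (a b p q : ℝ) (hp : 0 ≤ p) (hq : 0 ≤ q) (ha : 0 < a)
    (hb : 0 < b) (hab : a + b = 1) :
    a * Real.log (1 + p) + b * Real.log (1 + q) ≤ Real.log (1 + (a * p + b * q)) := by
  have := strictConcaveOn_log_Ioi.concaveOn.2 (x := 1 + p) (y := 1 + q)
    (by simp [Set.mem_Ioi]; linarith) (by simp [Set.mem_Ioi]; linarith) ha.le hb.le hab
  have he : a • (1 + p) + b • (1 + q) = 1 + (a * p + b * q) := by
    simp [smul_eq_mul]; ring_nf; linarith
  rw [he] at this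
  simpa [smul_eq_mul] using this

lemma log_term_strict (a b p q : ℝ) (hp : 0 ≤ p) (hq : 0 ≤ q) (ha : 0 < a)
    (hb : 0 < b) (hab : a + b = 1) (hne : p ≠ q) :
    a * Real.log (1 + p) + b * Real.log (1 + q) < Real.log (1 + (a * p + b * q)) := by
  have := strictConcaveOn_log_Ioi.2 (x := 1 + p) (y := 1 + q)
    (by simp [Set.mem_Ioi]; linarith) (by simp [Set.mem_Ioi]; linarith)
    (by intro h; exact hne (by linarith [add_left_cancel h])) ha hb hab
  have he : a • (1 + p) + b • (1 + q) = 1 + (a * p + b * q) := by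
    simp [smul_eq_mul]; ring_nf; linarith
  rw [he] at this
  simpa [smul_eq_mul] using this

/-- The feasible set `D` is convex and the potential function `H` is strictly
concave on `D`. -/
theorem feasible_set_convex_and_potential_strictConcaveOn
    (N : ℕ) (hN : 0 < N) (μ r : ℝ) (hμ : 0 < μ) (hr : 0 < r)
    (w : Fin N → ℝ) (hw : ∀ i, 0 < w i)
    (D : Set (Fin N → ℝ)) (hD : D = {x | (∀ i, x i ≥ 0) ∧ (∑ i, x i) < μ})
    (H : (Fin N → ℝ) → ℝ)
    (hH : ∀ x, H x = (∑ i, w i * Real.log (1 + x i)) - r * (∑ i, x i)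
        - 1 / (μ - ∑ i, x i)) :
    Convex ℝ D ∧ StrictConcaveOn ℝ D H := by
  subst hD
  have hconv : Convex ℝ {x : Fin N → ℝ | (∀ i, x i ≥ 0) ∧ (∑ i, x i) < μ} := by
    intro x hx y hy a b ha hb hab
    obtain ⟨hx1, hx2⟩ := hx
    obtain ⟨hy1, hy2⟩ := hy
    constructor
    · intro i
      have : (a • x + b • y) i = a * x i + b * y i := by simp [smul_eq_mul]
      rw [this]
      exact add_nonneg (mul_nonneg ha (hx1 i)) (mul_nonneg hb (hy1 i))
    · have hsum : (∑ i, (a • x + b • y) i) = a * (∑ i, x i) + b * (∑ i, y i) := by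
        simp [Finset.mul_sum, Finset.sum_add_distrib, smul_eq_mul]
      rw [hsum]
      exact combo_lt_aux a b _ _ μ ha hb hab hx2 hy2
  refine ⟨hconv, hconv, ?_⟩
  intro x hx y hy hxy a b ha hb hab
  obtain ⟨hx1, hx2⟩ := hx
  obtain ⟨hy1, hy2⟩ := hy
  set z := a • x + b • y with hz
  have hzi : ∀ i, z i = a * x i + b * y i := fun i => by simp [hz, smul_eq_mul]
  have hsum : (∑ i, z i) = a * (∑ i, x i) + b * (∑ i, y i) := by
    simp [hzi, Finset.mul_sum, Finset.sum_add_distrib]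
  -- sum of log terms
  have hlog : a * (∑ i, w i * Real.log (1 + x i)) + b * (∑ i, w i * Real.log (1 + y i))
      < ∑ i, w i * Real.log (1 + z i) := by
    rw [Finset.mul_sum, Finset.mul_sum, ← Finset.sum_add_distrib]
    obtain ⟨i0, hi0⟩ := Function.ne_iff.mp hxy
    apply Finset.sum_lt_sum
    · intro i _
      have := log_term_ineq a b (x i) (y i) (hx1 i) (hy1 i) ha hb hab
      rw [hzi i]
      nlinarith [(hw i).le, this]
    · refine ⟨i0, Finset.mem_univ i0, ?_⟩
      have := log_term_strict a b (x i0) (y i0) (hx1 i0) (hy1 i0) ha hb hab hi0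
      rw [hzi i0]
      nlinarith [hw i0, this]
  -- barrier term
  have hbar : 1 / (μ - ∑ i, z i) ≤ a * (1 / (μ - ∑ i, x i)) + b * (1 / (μ - ∑ i, y i)) := by
    have hux : 0 < μ - ∑ i, x i := sub_pos.2 hx2
    have huy : 0 < μ - ∑ i, y i := sub_pos.2 hy2
    have := inv_combo_aux (μ - ∑ i, x i) (μ - ∑ i, y i) a b hux huy ha hb hab
    have he : a * (μ - ∑ i, x i) + b * (μ - ∑ i, y i) = μ - ∑ i, z i := by
      rw [hsum]; ring_nf; nlinarith [hab]
    rw [he] at this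
    calc 1 / (μ - ∑ i, z i) ≤ a / (μ - ∑ i, x i) + b / (μ - ∑ i, y i) := this
      _ = a * (1 / (μ - ∑ i, x i)) + b * (1 / (μ - ∑ i, y i)) := by ring
  have hrterm : r * (∑ i, z i) = a * (r * ∑ i, x i) + b * (r * ∑ i, y i) := by
    rw [hsum]; ring
  rw [hH x, hH y, hH z]
  simp only [smul_eq_mul]
  linarith [hlog, hbar, hrterm]
end

section
/- For every x in D one has H(x) ≤ (∑ i, w i) * Real.log (1 + μ) − 1/(μ − ∑ i, x i); consequently, for any sequence (x^(n)) of points of D with ∑ i, x^(n) i → μ as n → ∞, H(x^(n)) → −∞. -/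
open Filter

/-! Each coordinate of a point of `D` is at most `μ`, so by monotonicity of `log` the weighted
log-utility is at most `(∑ i, w i) * log (1 + μ)`, while `-r x̄ ≤ 0`. The remaining barrier term
`-1/(μ - x̄)` tends to `-∞` as `x̄ → μ` from below. -/

theorem Finset.sum_mul_log_one_add_le {ι : Type*} (s : Finset ι) {w x : ι → ℝ} {μ : ℝ}
    (hw : ∀ i ∈ s, 0 ≤ w i) (hx : ∀ i ∈ s, 0 ≤ x i) (hsum : ∑ i ∈ s, x i ≤ μ) :
    ∑ i ∈ s, w i * Real.log (1 + x i) ≤ (∑ i ∈ s, w i) * Real.log (1 + μ) := by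
  rw [Finset.sum_mul]
  refine Finset.sum_le_sum fun i hi => mul_le_mul_of_nonneg_left ?_ (hw i hi)
  have hxi : x i ≤ μ := (Finset.single_le_sum hx hi).trans hsum
  exact Real.log_le_log (by linarith [hx i hi]) (by linarith)

theorem Filter.Tendsto.one_div_sub_atTop {α : Type*} {l : Filter α} {f : α → ℝ} {μ : ℝ}
    (hf : Tendsto f l (nhds μ)) (hlt : ∀ᶠ a in l, f a < μ) :
    Tendsto (fun a => 1 / (μ - f a)) l atTop := by
  have hgap : Tendsto (fun a => μ - f a) l (nhdsWithin 0 (Set.Ioi 0)) :=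
    tendsto_nhdsWithin_of_tendsto_nhds_of_eventually_within _
      (by simpa using hf.const_sub μ) (hlt.mono fun a ha => sub_pos.mpr ha)
  simpa only [one_div, Pi.inv_def] using hgap.inv_tendsto_nhdsGT_zero

theorem potential_upper_bound_and_tendsto_atBot_general
    (N : ℕ) (μ r : ℝ) (hr : 0 < r)
    (w : Fin N → ℝ) (hw : ∀ i, 0 < w i)
    (D : Set (Fin N → ℝ)) (hD : D = {x | (∀ i, x i ≥ 0) ∧ (∑ i, x i) < μ})
    (H : (Fin N → ℝ) → ℝ)
    (hH : ∀ x, H x = (∑ i, w i * Real.log (1 + x i)) - r * (∑ i, x i)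
        - 1 / (μ - ∑ i, x i)) :
    (∀ x ∈ D, H x ≤ (∑ i, w i) * Real.log (1 + μ) - 1 / (μ - ∑ i, x i)) ∧
    (∀ x : ℕ → (Fin N → ℝ), (∀ n, x n ∈ D) →
      Tendsto (fun n => ∑ i, x n i) atTop (nhds μ) →
      Tendsto (fun n => H (x n)) atTop atBot) := by
  have hmem : ∀ x ∈ D, (∀ i, x i ≥ 0) ∧ ∑ i, x i < μ := fun x hx => by rwa [hD] at hx
  have bound : ∀ x ∈ D, H x ≤ (∑ i, w i) * Real.log (1 + μ) - 1 / (μ - ∑ i, x i) := by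
    intro x hxD
    obtain ⟨hx, hlt⟩ := hmem x hxD
    have hlog := Finset.univ.sum_mul_log_one_add_le (fun i _ => (hw i).le) (fun i _ => hx i)
      hlt.le
    have hcost : 0 ≤ r * ∑ i, x i := mul_nonneg hr.le (Finset.sum_nonneg fun i _ => hx i)
    rw [hH]
    linarith
  refine ⟨bound, fun x hxD hsum => ?_⟩
  have hbarrier := hsum.one_div_sub_atTop (Eventually.of_forall fun n => (hmem _ (hxD n)).2)
  exact tendsto_atBot_mono (fun n => bound (x n) (hxD n))
    (tendsto_atBot_add_const_left _ _ (tendsto_neg_atBot_iff.mpr hbarrier))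

/-- On `D` the potential `H` is bounded above by
`(∑ i, w i) * log (1 + μ) - 1/(μ - ∑ i, x i)`; consequently `H` tends to `-∞`
along any sequence of points of `D` whose coordinate sum tends to `μ`. -/
theorem potential_upper_bound_and_tendsto_atBot
    (N : ℕ) (hN : 0 < N) (μ r : ℝ) (hμ : 0 < μ) (hr : 0 < r)
    (w : Fin N → ℝ) (hw : ∀ i, 0 < w i)
    (D : Set (Fin N → ℝ)) (hD : D = {x | (∀ i, x i ≥ 0) ∧ (∑ i, x i) < μ})
    (H : (Fin N → ℝ) → ℝ)
    (hH : ∀ x, H x = (∑ i, w i * Real.log (1 + x i)) - r * (∑ i, x i)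
        - 1 / (μ - ∑ i, x i)) :
    (∀ x ∈ D, H x ≤ (∑ i, w i) * Real.log (1 + μ) - 1 / (μ - ∑ i, x i)) ∧
    (∀ x : ℕ → (Fin N → ℝ), (∀ n, x n ∈ D) →
      Tendsto (fun n => ∑ i, x n i) atTop (nhds μ) →
      Tendsto (fun n => H (x n)) atTop atBot) :=
  potential_upper_bound_and_tendsto_atBot_general N μ r hr w hw D hD H hH
end

section
/- There exists a unique x* ∈ D such that H(x*) ≥ H(x) for every x ∈ D; that is, the constrained maximization of the potential function H over the feasible set D admits a unique solution. -/
/-!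
`H` is strictly concave on the convex set `D`: each `w i * log (1 + x i)` is strictly concave in
its own coordinate, `-r * x̄` is linear and the barrier `-1 / (μ - x̄)` is concave. Hence `H` has
at most one maximizer. For existence, the smooth part of `H` is bounded above on `D` while the
barrier tends to `-∞` as `x̄ → μ`, so `H < H 0` outside a compact slab `{x ≥ 0, x̄ ≤ μ - δ}`,
and a maximizer of `H` on that slab maximizes it on all of `D`.
-/

open Real Set

theorem StrictConcaveOn.sum_mul_apply {ι : Type*} [Fintype ι] {s : Set ℝ} {f : ℝ → ℝ}
    (hf : StrictConcaveOn ℝ s f) {w : ι → ℝ} (hw : ∀ i, 0 < w i) :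
    StrictConcaveOn ℝ (univ.pi fun _ => s) fun x => ∑ i, w i * f (x i) := by
  refine ⟨convex_pi fun _ _ => hf.1, fun x hx y hy hxy a b ha hb hab => ?_⟩
  obtain ⟨j, hj⟩ := Function.ne_iff.mp hxy
  simp only [Pi.add_apply, Pi.smul_apply, smul_eq_mul, Finset.mul_sum, ← Finset.sum_add_distrib]
  have hcombo : ∀ i, a * (w i * f (x i)) + b * (w i * f (y i)) =
      w i * (a • f (x i) + b • f (y i)) := fun i => by simp only [smul_eq_mul]; ring
  refine Finset.sum_lt_sum (fun i _ => ?_) ⟨j, Finset.mem_univ j, ?_⟩ <;> rw [hcombo]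
  · exact mul_le_mul_of_nonneg_left
      (hf.concaveOn.2 (hx i trivial) (hy i trivial) ha.le hb.le hab) (hw i).le
  · exact mul_lt_mul_of_pos_left (hf.2 (hx j trivial) (hy j trivial) hj ha hb hab) (hw j)

theorem strictConcaveOn_log_one_add : StrictConcaveOn ℝ (Ioi (-1)) fun t => log (1 + t) := by
  have h := strictConcaveOn_log_Ioi.translate_right 1
  have hs : (fun t : ℝ => 1 + t) ⁻¹' Ioi 0 = Ioi (-1) := by ext; simp [neg_lt_iff_pos_add']
  exact hs ▸ h

theorem convexOn_one_div_sub (μ : ℝ) : ConvexOn ℝ (Iio μ) fun t => 1 / (μ - t) := by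
  have h := (convexOn_zpow (𝕜 := ℝ) (-1)).comp_affineMap
    (AffineMap.const ℝ ℝ μ - AffineMap.id ℝ ℝ)
  have hs : (AffineMap.const ℝ ℝ μ - AffineMap.id ℝ ℝ) ⁻¹' Ioi 0 = Iio μ := by ext; simp
  rw [hs] at h
  exact h.congr fun t _ => by simp

theorem IsCompact.exists_isMaxOn_of_le_off {α β : Type*} [TopologicalSpace α] [LinearOrder β]
    [TopologicalSpace β] [ClosedIciTopology β] {s K : Set α} {f : α → β} {x₀ : α}
    (hK : IsCompact K) (hKs : K ⊆ s) (h₀ : x₀ ∈ K) (hf : ContinuousOn f K)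
    (hoff : ∀ x ∈ s, x ∉ K → f x ≤ f x₀) : ∃ x ∈ s, IsMaxOn f s x := by
  obtain ⟨x, hxK, hmax⟩ := hK.exists_isMaxOn ⟨x₀, h₀⟩ hf
  refine ⟨x, hKs hxK, fun y hy => ?_⟩
  by_cases hyK : y ∈ K
  · exact hmax hyK
  · exact (hoff y hy hyK).trans (hmax h₀)

theorem isCompact_setOf_nonneg_sum_le {ι : Type*} [Fintype ι] (c : ℝ) :
    IsCompact {x : ι → ℝ | 0 ≤ x ∧ ∑ i, x i ≤ c} := by
  refine (isCompact_Icc (a := 0) (b := fun _ => c)).of_isClosed_subset ?_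
    fun x hx => ⟨hx.1, fun i => ?_⟩
  · exact (isClosed_le continuous_const continuous_id).inter
      (isClosed_le (continuous_finsetSum _ fun i _ => continuous_apply i) continuous_const)
  · exact (Finset.single_le_sum (fun j _ => hx.1 j) (Finset.mem_univ i)).trans hx.2

section Potential

variable {ι : Type*} [Fintype ι]

def feasibleSet (μ : ℝ) : Set (ι → ℝ) := {x | (∀ i, x i ≥ 0) ∧ (∑ i, x i) < μ}

noncomputable def potential (w : ι → ℝ) (r μ : ℝ) (x : ι → ℝ) : ℝ :=
  (∑ i, w i * log (1 + x i)) - r * (∑ i, x i) - 1 / (μ - ∑ i, x i)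

variable {w : ι → ℝ} {r μ : ℝ}

theorem one_add_pos_of_mem_feasibleSet {x : ι → ℝ} (hx : x ∈ feasibleSet μ) (i : ι) :
    0 < 1 + x i := by
  linarith [hx.1 i]

theorem sub_sum_pos_of_mem_feasibleSet {x : ι → ℝ} (hx : x ∈ feasibleSet μ) :
    0 < μ - ∑ i, x i :=
  sub_pos.2 hx.2

theorem convex_feasibleSet : Convex ℝ (feasibleSet μ : Set (ι → ℝ)) := by
  have hL : ∀ x : ι → ℝ, Fintype.linearCombination ℝ (fun _ : ι => (1 : ℝ)) x = ∑ i, x i := by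
    simp [Fintype.linearCombination_apply]
  have h : (feasibleSet μ : Set (ι → ℝ)) = Ici 0 ∩
      Fintype.linearCombination ℝ (fun _ : ι => (1 : ℝ)) ⁻¹' Iio μ := by
    ext; simp [feasibleSet, hL, Pi.le_def]
  rw [h]
  exact (convex_Ici 0).inter ((convex_Iio μ).linear_preimage _)

theorem strictConcaveOn_potential (hw : ∀ i, 0 < w i) :
    StrictConcaveOn ℝ (feasibleSet μ) (potential w r μ) := by
  set L := Fintype.linearCombination ℝ (fun _ : ι => (1 : ℝ))
  have hL : ∀ x, L x = ∑ i, x i := by simp [L, Fintype.linearCombination_apply]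
  have hlog : StrictConcaveOn ℝ (feasibleSet μ) fun x => ∑ i, w i * log (1 + x i) :=
    (strictConcaveOn_log_one_add.sum_mul_apply hw).subset
      (fun x hx i _ => by simpa [neg_lt_iff_pos_add'] using one_add_pos_of_mem_feasibleSet hx i)
      convex_feasibleSet
  have hbarrier : ConcaveOn ℝ (Iio μ) fun t => -r * t - 1 / (μ - t) :=
    ((LinearMap.mul ℝ ℝ (-r)).concaveOn (convex_Iio μ)).sub (convexOn_one_div_sub μ)
  have hbarrier' : ConcaveOn ℝ (feasibleSet μ) ((fun t => -r * t - 1 / (μ - t)) ∘ L) :=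
    (hbarrier.comp_linearMap L).subset (fun x hx => by simpa [hL] using hx.2) convex_feasibleSet
  refine (hlog.add_concaveOn hbarrier').congr fun x _ => ?_
  simp only [Pi.add_apply, Function.comp_apply, hL, potential]
  ring

theorem continuousOn_potential : ContinuousOn (potential w r μ) (feasibleSet μ) := by
  unfold potential
  fun_prop (disch := intro x hx; first
    | exact (one_add_pos_of_mem_feasibleSet hx _).ne'
    | exact (sub_sum_pos_of_mem_feasibleSet hx).ne')

theorem potential_zero : potential w r μ 0 = -(1 / μ) := by
  simp [potential]

theorem exists_potential_le_sub_one_div (hμ : 0 ≤ μ) (hw : ∀ i, 0 ≤ w i) :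
    ∃ B ≥ 0, ∀ x ∈ feasibleSet μ, potential w r μ x ≤ B - 1 / (μ - ∑ i, x i) := by
  refine ⟨∑ i, w i * log (1 + μ) + |r| * μ, ?_, fun x hx => ?_⟩
  · exact add_nonneg (Finset.sum_nonneg fun i _ => mul_nonneg (hw i) (log_nonneg (by linarith)))
      (mul_nonneg (abs_nonneg r) hμ)
  have hsum : 0 ≤ ∑ i, x i := Finset.sum_nonneg fun i _ => hx.1 i
  have hlog : ∑ i, w i * log (1 + x i) ≤ ∑ i, w i * log (1 + μ) := by
    refine Finset.sum_le_sum fun i _ => mul_le_mul_of_nonneg_left ?_ (hw i)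
    refine log_le_log (one_add_pos_of_mem_feasibleSet hx i) ?_
    linarith [Finset.single_le_sum (fun j _ => hx.1 j) (Finset.mem_univ i), hx.2]
  have hlin : -(r * ∑ i, x i) ≤ |r| * μ :=
    calc -(r * ∑ i, x i) ≤ |r * ∑ i, x i| := neg_le_abs _
      _ = |r| * ∑ i, x i := by rw [abs_mul, abs_of_nonneg hsum]
      _ ≤ |r| * μ := by gcongr; exact hx.2.le
  unfold potential
  linarith

theorem exists_isMaxOn_potential (hμ : 0 < μ) (hw : ∀ i, 0 ≤ w i) :
    ∃ x ∈ feasibleSet μ, IsMaxOn (potential w r μ) (feasibleSet μ) x := by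
  obtain ⟨B, hB, hbound⟩ := exists_potential_le_sub_one_div (r := r) hμ.le hw
  -- Where `μ - ∑ i, x i < δ`, the barrier alone pushes the potential below its value `-1/μ` at `0`.
  set δ := 1 / (B + 1 / μ)
  have hδ : 0 < δ := by positivity
  have hδμ : δ ≤ μ := by
    rw [one_div_le (by positivity) hμ]
    linarith
  refine (isCompact_setOf_nonneg_sum_le (μ - δ)).exists_isMaxOn_of_le_off
    (fun x hx => ⟨hx.1, by linarith [hx.2]⟩) ⟨le_rfl, by simp [hδμ]⟩
    (continuousOn_potential.mono fun x hx => ⟨hx.1, by linarith [hx.2]⟩) fun x hx hxK => ?_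
  have hnear : μ - ∑ i, x i < δ := by
    have : ¬∑ i, x i ≤ μ - δ := fun h => hxK ⟨fun i => hx.1 i, h⟩
    linarith
  have hbarrier : B + 1 / μ < 1 / (μ - ∑ i, x i) := by
    rwa [lt_one_div (by positivity) (sub_sum_pos_of_mem_feasibleSet hx)]
  linarith [hbound x hx, potential_zero (w := w) (r := r) (μ := μ)]

end Potential

theorem potential_has_unique_maximizer_general
    (N : ℕ) (μ r : ℝ) (hμ : 0 < μ)
    (w : Fin N → ℝ) (hw : ∀ i, 0 < w i)
    (D : Set (Fin N → ℝ)) (hD : D = {x | (∀ i, x i ≥ 0) ∧ (∑ i, x i) < μ})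
    (H : (Fin N → ℝ) → ℝ)
    (hH : ∀ x, H x = (∑ i, w i * Real.log (1 + x i)) - r * (∑ i, x i)
        - 1 / (μ - ∑ i, x i)) :
    ∃! xstar, xstar ∈ D ∧ ∀ x ∈ D, H x ≤ H xstar := by
  obtain rfl : D = feasibleSet μ := hD
  obtain rfl : H = potential w r μ := funext hH
  obtain ⟨xstar, hxstar, hmax⟩ := exists_isMaxOn_potential hμ fun i => (hw i).le
  refine ⟨xstar, ⟨hxstar, isMaxOn_iff.mp hmax⟩, fun y ⟨hy, hymax⟩ => ?_⟩
  exact (strictConcaveOn_potential hw).eq_of_isMaxOn (isMaxOn_iff.mpr hymax) hmax hy hxstar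

/-- The constrained maximization of the potential `H` over the feasible set `D`
admits a unique solution. -/
theorem potential_has_unique_maximizer
    (N : ℕ) (hN : 0 < N) (μ r : ℝ) (hμ : 0 < μ) (hr : 0 < r)
    (w : Fin N → ℝ) (hw : ∀ i, 0 < w i)
    (D : Set (Fin N → ℝ)) (hD : D = {x | (∀ i, x i ≥ 0) ∧ (∑ i, x i) < μ})
    (H : (Fin N → ℝ) → ℝ)
    (hH : ∀ x, H x = (∑ i, w i * Real.log (1 + x i)) - r * (∑ i, x i)
        - 1 / (μ - ∑ i, x i)) :
    ∃! xstar, xstar ∈ D ∧ ∀ x ∈ D, H x ≤ H xstar :=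
  potential_has_unique_maximizer_general N μ r hμ w hw D hD H hH
end

section
/- If x ∈ D with x i > −1 for all i satisfies the first-order conditions, then the ratios w i/(1 + x i) are equal across players: for all i, j, w i/(1 + x i) = w j/(1 + x j); consequently, writing w̄ = ∑ j, w j and ȳ = N + ∑ j, x j, one has 1 + x i = (w i/w̄) * ȳ for every i. -/
/-- At any feasible point satisfying the first-order conditions, the ratios
`w i / (1 + x i)` are equal across players, and consequently
`1 + x i = (w i / w̄) * ȳ` where `w̄ = ∑ j, w j` and `ȳ = N + ∑ j, x j`. -/
theorem first_order_conditions_ratios_equal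
    (N : ℕ) (hN : 0 < N) (μ r : ℝ) (hμ : 0 < μ) (hr : 0 < r)
    (w : Fin N → ℝ) (hw : ∀ i, 0 < w i)
    (D : Set (Fin N → ℝ)) (hD : D = {x | (∀ i, x i ≥ 0) ∧ (∑ i, x i) < μ})
    (x : Fin N → ℝ) (hxD : x ∈ D) (hx : ∀ i, x i > -1)
    (hfoc : ∀ i, w i / (1 + x i) - r - 1 / (μ - ∑ j, x j) ^ 2 = 0) :
    (∀ i j, w i / (1 + x i) = w j / (1 + x j)) ∧
    (∀ i, 1 + x i = (w i / ∑ j, w j) * ((N : ℝ) + ∑ j, x j)) := by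
  set c : ℝ := r + 1 / (μ - ∑ j, x j) ^ 2 with hc
  have hcpos : 0 < c := by positivity
  have hxi : ∀ i, 0 < 1 + x i := fun i => by linarith [hx i]
  have hrat : ∀ i, w i / (1 + x i) = c := fun i => by
    have := hfoc i; linarith
  have heq : ∀ i, 1 + x i = w i / c := fun i => by
    have h := (div_eq_iff (hxi i).ne').mp (hrat i)
    rw [eq_div_iff hcpos.ne']
    linarith
  have hsum : (N : ℝ) + ∑ j, x j = (∑ j, w j) / c := by
    rw [Finset.sum_div]
    have : ∀ j ∈ Finset.univ, w j / c = 1 + x j := fun j _ => (heq j).symm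
    rw [Finset.sum_congr rfl this, Finset.sum_add_distrib]
    simp
  have hwbar : 0 < ∑ j, w j :=
    Finset.sum_pos (fun j _ => hw j) (Finset.univ_nonempty_iff.mpr ⟨⟨0, hN⟩⟩)
  constructor
  · intro i j; rw [hrat i, hrat j]
  · intro i
    rw [heq i, hsum]
    field_simp
end

section
/- Let w̄ = ∑ j, w j and let ȳ ∈ ℝ with N ≤ ȳ < N + μ, and define x : Fin N → ℝ by x i = (w i/w̄) * ȳ − 1. Then ∑ i, x i = ȳ − N, and x satisfies the first-order conditions (for every i, w i/(1 + x i) − r − 1/(μ − ∑ j, x j)² = 0) if and only if L̃(ȳ) = 0, where L̃(ȳ) = w̄/ȳ − r − 1/(μ + N − ȳ)². -/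
/-! The ansatz `x i = (w i / w̄) ȳ - 1` makes `w i / (1 + x i) = w̄ / ȳ` independent of `i`, and the
weights `w i / w̄` sum to one, so `∑ i, x i = ȳ - N`. Each first-order condition then reads
`L̃(ȳ) = 0`, and there is at least one condition since `N > 0`. -/

theorem sum_div_sum_mul_sub_one {ι K : Type*} [Fintype ι] [Field K] (w : ι → K) (y : K)
    (hw : ∑ j, w j ≠ 0) : ∑ i, (w i / (∑ j, w j) * y - 1) = y - Fintype.card ι := by
  rw [Finset.sum_sub_distrib, ← Finset.sum_mul, ← Finset.sum_div, div_self hw, one_mul]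
  simp

theorem div_one_add_div_mul_sub_one {K : Type*} [Field K] {a : K} (b c : K) (ha : a ≠ 0) :
    a / (1 + (a / b * c - 1)) = b / c := by
  rw [add_sub_cancel, ← div_div, div_div_cancel₀ ha]

theorem first_order_conditions_iff_Ltilde_eq_zero_general
    (N : ℕ) (hN : 0 < N) (μ r : ℝ)
    (w : Fin N → ℝ) (hw : ∀ i, 0 < w i)
    (wbar : ℝ) (hwbar : wbar = ∑ j, w j)
    (ybar : ℝ)
    (x : Fin N → ℝ) (hx : ∀ i, x i = (w i / wbar) * ybar - 1) :
    (∑ i, x i) = ybar - N ∧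
    ((∀ i, w i / (1 + x i) - r - 1 / (μ - ∑ j, x j) ^ 2 = 0) ↔
      wbar / ybar - r - 1 / (μ + (N : ℝ) - ybar) ^ 2 = 0) := by
  have : Nonempty (Fin N) := Fin.pos_iff_nonempty.mp hN
  subst hwbar
  have hsum : ∑ i, x i = ybar - N := by
    simpa only [hx, Fintype.card_fin] using
      sum_div_sum_mul_sub_one w ybar (Finset.univ.sum_pos (fun i _ ↦ hw i) Finset.univ_nonempty).ne'
  have hratio (i : Fin N) : w i / (1 + x i) = (∑ j, w j) / ybar := by
    rw [hx i, div_one_add_div_mul_sub_one _ _ (hw i).ne']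
  refine ⟨hsum, ?_⟩
  simp only [hratio, hsum, forall_const, show μ - (ybar - N) = μ + N - ybar by ring]

/-- For `x i = (w i / w̄) * ȳ - 1` with `N ≤ ȳ < N + μ`, one has
`∑ i, x i = ȳ - N`, and `x` satisfies the first-order conditions iff
`L̃(ȳ) = w̄/ȳ - r - 1/(μ + N - ȳ)² = 0`. -/
theorem first_order_conditions_iff_Ltilde_eq_zero
    (N : ℕ) (hN : 0 < N) (μ r : ℝ) (hμ : 0 < μ) (hr : 0 < r)
    (w : Fin N → ℝ) (hw : ∀ i, 0 < w i)
    (wbar : ℝ) (hwbar : wbar = ∑ j, w j)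
    (ybar : ℝ) (hy1 : (N : ℝ) ≤ ybar) (hy2 : ybar < (N : ℝ) + μ)
    (x : Fin N → ℝ) (hx : ∀ i, x i = (w i / wbar) * ybar - 1) :
    (∑ i, x i) = ybar - N ∧
    ((∀ i, w i / (1 + x i) - r - 1 / (μ - ∑ j, x j) ^ 2 = 0) ↔
      wbar / ybar - r - 1 / (μ + (N : ℝ) - ybar) ^ 2 = 0) :=
  first_order_conditions_iff_Ltilde_eq_zero_general N hN μ r w hw wbar hwbar ybar x hx
end

section
/- If the puzzle difficulty satisfies r < w̄/N − 1/μ², then there exists a unique ȳ ∈ (N, N + μ) with L̃(ȳ) = 0; conversely, if r ≥ w̄/N − 1/μ² then L̃(ȳ) < 0 for every ȳ ∈ (N, N + μ), so no such root exists. -/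
/-- If `r < w̄/N - 1/μ²` then `L̃` has a unique root in `(N, N + μ)`;
conversely, if `r ≥ w̄/N - 1/μ²` then `L̃ < 0` on all of `(N, N + μ)`. -/
theorem Ltilde_root_iff_difficulty_condition
    (N : ℕ) (hN : 0 < N) (μ r wbar : ℝ) (hμ : 0 < μ) (hr : 0 < r)
    (hwbar : 0 < wbar)
    (L : ℝ → ℝ)
    (hL : ∀ y, L y = wbar / y - r - 1 / (μ + (N : ℝ) - y) ^ 2) :
    (r < wbar / (N : ℝ) - 1 / μ ^ 2 →
      ∃! y, y ∈ Set.Ioo ((N : ℝ)) ((N : ℝ) + μ) ∧ L y = 0) ∧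
    (wbar / (N : ℝ) - 1 / μ ^ 2 ≤ r →
      ∀ y ∈ Set.Ioo ((N : ℝ)) ((N : ℝ) + μ), L y < 0) := by
  have hN0 : (0:ℝ) < (N:ℝ) := by exact_mod_cast hN
  -- L is strictly decreasing on [N, N+μ)
  have anti : ∀ a ∈ Set.Ico ((N:ℝ)) ((N:ℝ) + μ), ∀ b ∈ Set.Ico ((N:ℝ)) ((N:ℝ) + μ),
      a < b → L b < L a := by
    intro a ha b hb hab
    rw [hL, hL]
    have ha0 : 0 < a := lt_of_lt_of_le hN0 ha.1
    have hcb : 0 < μ + (N:ℝ) - b := by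
      have := hb.2; linarith
    have hca : μ + (N:ℝ) - b < μ + (N:ℝ) - a := by linarith
    have h1 : wbar / b < wbar / a := div_lt_div_of_pos_left hwbar ha0 hab
    have h2 : 1 / (μ + (N:ℝ) - a) ^ 2 < 1 / (μ + (N:ℝ) - b) ^ 2 := by
      apply one_div_lt_one_div_of_lt (pow_pos hcb 2)
      exact pow_lt_pow_left₀ hca hcb.le (by norm_num)
    linarith
  have hLN : L (N:ℝ) = wbar / (N:ℝ) - r - 1 / μ ^ 2 := by
    rw [hL]
    have h : μ + (N:ℝ) - (N:ℝ) = μ := by ring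
    rw [h]
  constructor
  · intro hrlt
    have hLNpos : 0 < L (N:ℝ) := by rw [hLN]; linarith
    -- choose b close to N + μ with L b < 0
    set ε := min (μ / 2) (Real.sqrt ((N:ℝ) / wbar) / 2) with hεdef
    have hs : 0 < Real.sqrt ((N:ℝ) / wbar) := Real.sqrt_pos.mpr (by positivity)
    have hε0 : 0 < ε := lt_min (by linarith) (by linarith)
    have hεμ : ε ≤ μ / 2 := min_le_left _ _
    have hεs : ε < Real.sqrt ((N:ℝ) / wbar) := lt_of_le_of_lt (min_le_right _ _) (by linarith)
    have hε2 : ε ^ 2 < (N:ℝ) / wbar := by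
      have h := pow_lt_pow_left₀ hεs hε0.le (two_ne_zero)
      rwa [Real.sq_sqrt (by positivity)] at h
    set b := (N:ℝ) + μ - ε with hbdef
    have hNb : (N:ℝ) < b := by simp only [hbdef]; linarith
    have hbμ : b < (N:ℝ) + μ := by simp only [hbdef]; linarith
    have hb0 : 0 < b := lt_trans hN0 hNb
    have hLb : L b < 0 := by
      rw [hL]
      have h : μ + (N:ℝ) - b = ε := by simp only [hbdef]; ring
      rw [h]
      have h1 : wbar / b ≤ wbar / (N:ℝ) :=
        div_le_div_of_nonneg_left hwbar.le hN0 hNb.le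
      have h2 : wbar / (N:ℝ) < 1 / ε ^ 2 := by
        rw [div_lt_div_iff₀ hN0 (pow_pos hε0 2)]
        have := (lt_div_iff₀ hwbar).mp hε2
        nlinarith
      linarith
    -- continuity of L on [N, b]
    have hcont : ContinuousOn L (Set.Icc (N:ℝ) b) := by
      have hfun : L = fun y => wbar / y - r - 1 / (μ + (N:ℝ) - y) ^ 2 := funext hL
      rw [hfun]
      apply ContinuousOn.sub
      apply ContinuousOn.sub
      · exact ContinuousOn.div continuousOn_const continuousOn_id
          (fun y hy => ne_of_gt (lt_of_lt_of_le hN0 hy.1))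
      · exact continuousOn_const
      · apply ContinuousOn.div continuousOn_const
        · fun_prop
        · intro y hy
          have : 0 < μ + (N:ℝ) - y := by
            have := hy.2
            have : y < (N:ℝ) + μ := lt_of_le_of_lt hy.2 hbμ
            linarith
          positivity
    have hmem : (0:ℝ) ∈ Set.Ioo (L b) (L (N:ℝ)) := ⟨hLb, hLNpos⟩
    obtain ⟨y, hyIoo, hy0⟩ := intermediate_value_Ioo' hNb.le hcont hmem
    refine ⟨y, ⟨⟨hyIoo.1, lt_trans hyIoo.2 hbμ⟩, hy0⟩, ?_⟩
    intro y' ⟨hy'mem, hy'0⟩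
    have hyIco : y ∈ Set.Ico ((N:ℝ)) ((N:ℝ) + μ) :=
      ⟨hyIoo.1.le, lt_trans hyIoo.2 hbμ⟩
    have hy'Ico : y' ∈ Set.Ico ((N:ℝ)) ((N:ℝ) + μ) := ⟨hy'mem.1.le, hy'mem.2⟩
    rcases lt_trichotomy y' y with h | h | h
    · have := anti y' hy'Ico y hyIco h
      rw [hy0, hy'0] at this; linarith
    · exact h
    · have := anti y hyIco y' hy'Ico h
      rw [hy0, hy'0] at this; linarith
  · intro hge y hy
    have hLN0 : L (N:ℝ) ≤ 0 := by rw [hLN]; linarith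
    have := anti (N:ℝ) ⟨le_refl _, by linarith⟩ y ⟨hy.1.le, hy.2⟩ hy.1
    linarith
end

section
/- The provider's objective G(ȳ) = (w̄/ȳ − 1/(μ + N − ȳ)²) * (ȳ − N) is strictly concave on the interval [N, N + μ). -/
/-!
With `t = N + μ - ȳ`, the objective expands to `w̄ - w̄ N / ȳ + 1 / t - μ / t²`, whose second
derivative `-2 w̄ N / ȳ³ + (2 t - 6 μ) / t⁴` is negative whenever `ȳ > 0` and `0 < t < 3 μ`,
in particular on `[N, N + μ)`.
-/

open Set

lemma hasDerivAt_const_sub_zpow (m : ℤ) {c x : ℝ} (hx : c - x ≠ 0) :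
    HasDerivAt (fun y => (c - y) ^ m) (-(m * (c - x) ^ (m - 1))) x := by
  have h := (hasDerivAt_zpow m (c - x) (.inl hx)).comp x ((hasDerivAt_id x).const_sub c)
  rwa [mul_neg_one] at h

noncomputable def reducedObjective (a c μ y : ℝ) : ℝ :=
  -a * y ^ (-1 : ℤ) + (c - y) ^ (-1 : ℤ) - μ * (c - y) ^ (-2 : ℤ)

section

variable {a c μ x : ℝ}

lemma hasDerivAt_reducedObjective (hx : x ≠ 0) (hcx : c - x ≠ 0) :
    HasDerivAt (reducedObjective a c μ)
      (a * x ^ (-2 : ℤ) + (c - x) ^ (-2 : ℤ) - 2 * μ * (c - x) ^ (-3 : ℤ)) x := by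
  have h := (((hasDerivAt_zpow (-1) x (.inl hx)).const_mul (-a)).add
    (hasDerivAt_const_sub_zpow (-1) hcx)).sub ((hasDerivAt_const_sub_zpow (-2) hcx).const_mul μ)
  refine h.congr_deriv ?_
  norm_num
  ring

lemma hasDerivAt_deriv_reducedObjective (hx : x ≠ 0) (hcx : c - x ≠ 0) :
    HasDerivAt (fun y => a * y ^ (-2 : ℤ) + (c - y) ^ (-2 : ℤ) - 2 * μ * (c - y) ^ (-3 : ℤ))
      (-2 * a * x ^ (-3 : ℤ) + 2 * (c - x) ^ (-3 : ℤ) - 6 * μ * (c - x) ^ (-4 : ℤ)) x := by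
  have h := (((hasDerivAt_zpow (-2) x (.inl hx)).const_mul a).add
    (hasDerivAt_const_sub_zpow (-2) hcx)).sub
      ((hasDerivAt_const_sub_zpow (-3) hcx).const_mul (2 * μ))
  refine h.congr_deriv ?_
  norm_num
  ring

lemma iterate_deriv_two_reducedObjective (hx : 0 < x) (hcx : x < c) :
    deriv^[2] (reducedObjective a c μ) x =
      -2 * a * x ^ (-3 : ℤ) + 2 * (c - x) ^ (-3 : ℤ) - 6 * μ * (c - x) ^ (-4 : ℤ) := by
  have hderiv : deriv (reducedObjective a c μ) =ᶠ[nhds x]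
      fun y => a * y ^ (-2 : ℤ) + (c - y) ^ (-2 : ℤ) - 2 * μ * (c - y) ^ (-3 : ℤ) := by
    filter_upwards [Ioo_mem_nhds hx hcx] with y hy
    exact (hasDerivAt_reducedObjective hy.1.ne' (sub_pos.2 hy.2).ne').deriv
  rw [Function.iterate_succ_apply, Function.iterate_one, hderiv.deriv_eq,
    (hasDerivAt_deriv_reducedObjective hx.ne' (sub_pos.2 hcx).ne').deriv]

lemma strictConcaveOn_reducedObjective (ha : 0 < a) :
    StrictConcaveOn ℝ (Ioi 0 ∩ Ioo (c - 3 * μ) c) (reducedObjective a c μ) := by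
  refine strictConcaveOn_of_deriv2_neg' ((convex_Ioi 0).inter (convex_Ioo _ _)) ?_ ?_
  · intro x hx
    exact (hasDerivAt_reducedObjective (a := a) (μ := μ) hx.1.ne'
      (sub_pos.2 hx.2.2).ne').continuousAt.continuousWithinAt
  · rintro x ⟨hx, hlo, hhi⟩
    rw [mem_Ioi] at hx
    rw [iterate_deriv_two_reducedObjective hx hhi]
    have ht : 0 < c - x := sub_pos.2 hhi
    have hsplit : 2 * (c - x) ^ (-3 : ℤ) - 6 * μ * (c - x) ^ (-4 : ℤ)
        = (2 * (c - x) - 6 * μ) * (c - x) ^ (-4 : ℤ) := by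
      rw [show (-3 : ℤ) = 1 + -4 by norm_num, zpow_add₀ ht.ne', zpow_one]; ring
    have h1 : 0 < a * x ^ (-3 : ℤ) := by positivity
    have h2 : (2 * (c - x) - 6 * μ) * (c - x) ^ (-4 : ℤ) < 0 :=
      mul_neg_of_neg_of_pos (by linarith) (by positivity)
    linarith

end

lemma objective_eq_add_reducedObjective {N μ w y : ℝ} (hy : y ≠ 0) (hcy : μ + N - y ≠ 0) :
    (w / y - 1 / (μ + N - y) ^ 2) * (y - N) = reducedObjective (w * N) (N + μ) μ y + w := by
  have hcy' : N + μ - y ≠ 0 := by rwa [add_comm]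
  simp only [reducedObjective, zpow_neg, zpow_ofNat]
  field_simp
  ring

/-- The provider's objective `G(ȳ) = (w̄/ȳ - 1/(μ + N - ȳ)²) * (ȳ - N)` is
strictly concave on `[N, N + μ)`. -/
theorem provider_objective_strictConcaveOn
    (N : ℕ) (hN : 0 < N) (μ wbar : ℝ) (hμ : 0 < μ) (hwbar : 0 < wbar)
    (G : ℝ → ℝ)
    (hG : ∀ y, G y = (wbar / y - 1 / (μ + (N : ℝ) - y) ^ 2) * (y - (N : ℝ))) :
    StrictConcaveOn ℝ (Set.Ico ((N : ℝ)) ((N : ℝ) + μ)) G := by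
  have hN0 : (0 : ℝ) < N := by exact_mod_cast hN
  have hsub : Ico (N : ℝ) (N + μ) ⊆ Ioi 0 ∩ Ioo (N + μ - 3 * μ) (N + μ) :=
    fun y hy => ⟨hN0.trans_le hy.1, by linarith [hy.1], hy.2⟩
  refine (((strictConcaveOn_reducedObjective (μ := μ) (mul_pos hwbar hN0)).subset hsub
    (convex_Ico _ _)).add_const wbar).congr fun y hy => ?_
  rw [hG, objective_eq_add_reducedObjective (hN0.trans_le hy.1).ne' (by linarith [hy.2])]
  rfl
end

section
/- If w̄/N > 1/μ², then G attains its maximum over [N, N + μ) at a unique point ȳ* which lies in the open interval (N, N + μ), and ȳ* satisfies the first-order condition w̄ * N/ȳ*² = (μ + ȳ* − N)/(μ + N − ȳ*)³. -/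
/-!
On `(N, N + μ)` the derivative `G' y = w̄N/y² - (μ + y - N)/(μ + N - y)³` is strictly decreasing,
so `G` has at most one critical point there. A maximum exists and is interior: `G N = 0` and
`G' N > 0` make `G` positive just right of `N`, while `G < 0` within `√(N/w̄)` of `N + μ` (a
nonempty range because `N < w̄μ²`), so the maximum of `G` on a compact `[N, b]` dominates
`[b, N + μ)`. By Fermat's theorem every interior maximizer is a critical point, which gives both
uniqueness and the first-order condition.
-/

open Set Filter Topology

theorem HasDerivAt.exists_mem_Ioo_lt_of_pos {f : ℝ → ℝ} {f' a b : ℝ}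
    (hf : HasDerivAt f f' a) (hf' : 0 < f') (hab : a < b) : ∃ y ∈ Ioo a b, f a < f y := by
  have hslope : Tendsto (slope f a) (𝓝[>] a) (𝓝 f') :=
    (hasDerivAt_iff_tendsto_slope.mp hf).mono_left (nhdsGT_le_nhdsNE a)
  obtain ⟨y, hpos, hy⟩ :=
    ((hslope.eventually (lt_mem_nhds hf')).and (Ioo_mem_nhdsGT hab)).exists
  exact ⟨y, hy, (slope_pos_iff_of_le hy.1.le).mp hpos⟩

theorem exists_mem_Ioo_isMaxOn_Ico {f : ℝ → ℝ} {a b c : ℝ} (hf : ContinuousOn f (Icc a b))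
    (hbc : b < c) (hpos : ∃ y ∈ Icc a b, f a < f y) (hle : ∀ y ∈ Ico b c, f y ≤ f a) :
    ∃ x ∈ Ioo a c, IsMaxOn f (Ico a c) x := by
  obtain ⟨y, hy, hay⟩ := hpos
  obtain ⟨x, hx, hmax⟩ := isCompact_Icc.exists_isMaxOn ⟨y, hy⟩ hf
  have hax : f a < f x := hay.trans_le (hmax hy)
  refine ⟨x, ⟨lt_of_le_of_ne hx.1 ?_, hx.2.trans_lt hbc⟩, fun z hz => ?_⟩
  · rintro rfl
    exact hax.false
  · rcases le_or_gt z b with hzb | hbz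
    · exact hmax ⟨hz.1, hzb⟩
    · exact (hle z ⟨hbz.le, hz.2⟩).trans hax.le

noncomputable def providerObjective (N μ w y : ℝ) : ℝ :=
  (w / y - 1 / (μ + N - y) ^ 2) * (y - N)

noncomputable def providerObjectiveDeriv (N μ w y : ℝ) : ℝ :=
  w * N / y ^ 2 - (μ + y - N) / (μ + N - y) ^ 3

section
variable {N μ w : ℝ}

theorem hasDerivAt_providerObjective {y : ℝ} (hy : y ≠ 0) (hyμ : μ + N - y ≠ 0) :
    HasDerivAt (providerObjective N μ w) (providerObjectiveDeriv N μ w y) y := by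
  have h := (((hasDerivAt_const y w).div (hasDerivAt_id y) hy).sub
    ((hasDerivAt_const y 1).div (((hasDerivAt_id y).const_sub (μ + N)).pow 2)
      (pow_ne_zero 2 hyμ))).mul ((hasDerivAt_id y).sub_const N)
  refine h.congr_deriv ?_
  simp only [providerObjectiveDeriv, id, Pi.pow_apply, Pi.sub_apply, Pi.div_apply]
  field_simp
  ring

theorem providerObjectiveDeriv_self (hN : N ≠ 0) (hμ : μ ≠ 0) :
    providerObjectiveDeriv N μ w N = w / N - 1 / μ ^ 2 := by
  simp only [providerObjectiveDeriv, add_sub_cancel_right]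
  field_simp

theorem strictAntiOn_providerObjectiveDeriv (hN : 0 ≤ N) (hw : 0 ≤ w) :
    StrictAntiOn (providerObjectiveDeriv N μ w) (Ioo N (N + μ)) := by
  intro y₁ hy₁ y₂ hy₂ h
  obtain ⟨hN₁, h₁μ⟩ := hy₁
  obtain ⟨hN₂, h₂μ⟩ := hy₂
  have hy₁ : 0 < y₁ := by linarith
  have hfirst : w * N / y₂ ^ 2 ≤ w * N / y₁ ^ 2 := by gcongr
  have hgap₁ : 0 < μ + N - y₁ := by linarith
  have hgap₂ : 0 < μ + N - y₂ := by linarith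
  have hsecond : (μ + y₁ - N) / (μ + N - y₁) ^ 3 < (μ + y₂ - N) / (μ + N - y₂) ^ 3 :=
    calc (μ + y₁ - N) / (μ + N - y₁) ^ 3 < (μ + y₂ - N) / (μ + N - y₁) ^ 3 := by gcongr
      _ ≤ (μ + y₂ - N) / (μ + N - y₂) ^ 3 := by gcongr; linarith
  simp only [providerObjectiveDeriv]
  linarith

theorem continuousOn_providerObjective (hN : 0 < N) :
    ContinuousOn (providerObjective N μ w) (Ico N (N + μ)) := fun y hy =>
  (hasDerivAt_providerObjective (by linarith [hy.1]) (by linarith [hy.2])).continuousAt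
    |>.continuousWithinAt

theorem providerObjectiveDeriv_eq_zero_of_isMaxOn (hN : 0 ≤ N) {z : ℝ}
    (hz : z ∈ Ioo N (N + μ)) (hmax : IsMaxOn (providerObjective N μ w) (Ico N (N + μ)) z) :
    providerObjectiveDeriv N μ w z = 0 :=
  (hmax.isLocalMax (mem_of_superset (Ioo_mem_nhds hz.1 hz.2) Ioo_subset_Ico_self))
    |>.hasDerivAt_eq_zero (hasDerivAt_providerObjective (by linarith [hz.1]) (by linarith [hz.2]))

theorem providerObjective_neg {y : ℝ} (hw : 0 ≤ w) (hNy : N < y) (hyμ : y < N + μ)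
    (h : w * (μ + N - y) ^ 2 < y) : providerObjective N μ w y < 0 := by
  have hgap : 0 < μ + N - y := by linarith
  have hy : 0 < y := by nlinarith
  have : w / y < 1 / (μ + N - y) ^ 2 := by
    rw [div_lt_div_iff₀ hy (by positivity)]
    linarith
  exact mul_neg_of_neg_of_pos (by linarith) (by linarith)

theorem exists_forall_mem_Ico_providerObjective_neg (hN : 0 < N) (hμ : 0 < μ) (hw : 0 < w)
    (hcond : 1 / μ ^ 2 < w / N) :
    ∃ b ∈ Ioo N (N + μ), ∀ y ∈ Ico b (N + μ), providerObjective N μ w y < 0 := by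
  set δ := √(N / w)
  have hδμ : δ < μ := by
    rw [Real.sqrt_lt' hμ, div_lt_iff₀ hw]
    rw [div_lt_div_iff₀ (by positivity) hN] at hcond
    linarith
  refine ⟨N + μ - δ, ⟨by linarith, by linarith [Real.sqrt_pos.mpr (div_pos hN hw)]⟩, ?_⟩
  intro y ⟨hby, hyμ⟩
  have hgap : (μ + N - y) ^ 2 ≤ N / w := by
    rw [← Real.sq_sqrt (div_pos hN hw).le]
    gcongr <;> linarith
  apply providerObjective_neg hw.le (by linarith) hyμ
  calc w * (μ + N - y) ^ 2 ≤ N := by rwa [← le_div_iff₀' hw]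
    _ < y := by linarith

end

/-- If `w̄/N > 1/μ²` then `G` attains its maximum over `[N, N + μ)` at a unique
point `ȳ*`, which lies in the open interval `(N, N + μ)` and satisfies the
first-order condition `w̄N/ȳ*² = (μ + ȳ* - N)/(μ + N - ȳ*)³`. -/
theorem provider_objective_unique_interior_maximizer
    (N : ℕ) (hN : 0 < N) (μ wbar : ℝ) (hμ : 0 < μ) (hwbar : 0 < wbar)
    (G : ℝ → ℝ)
    (hG : ∀ y, G y = (wbar / y - 1 / (μ + (N : ℝ) - y) ^ 2) * (y - (N : ℝ)))
    (hcond : 1 / μ ^ 2 < wbar / (N : ℝ)) :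
    ∃ ystar ∈ Set.Ioo ((N : ℝ)) ((N : ℝ) + μ),
      (∀ y ∈ Set.Ico ((N : ℝ)) ((N : ℝ) + μ), G y ≤ G ystar) ∧
      (∀ z ∈ Set.Ico ((N : ℝ)) ((N : ℝ) + μ),
        (∀ y ∈ Set.Ico ((N : ℝ)) ((N : ℝ) + μ), G y ≤ G z) → z = ystar) ∧
      wbar * (N : ℝ) / ystar ^ 2
        = (μ + ystar - (N : ℝ)) / (μ + (N : ℝ) - ystar) ^ 3 := by
  have hN₀ : (0 : ℝ) < N := Nat.cast_pos.mpr hN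
  obtain rfl : G = providerObjective N μ wbar := funext hG
  have hzero : providerObjective N μ wbar N = 0 := by simp [providerObjective]
  obtain ⟨b, ⟨hNb, hbμ⟩, hneg⟩ := exists_forall_mem_Ico_providerObjective_neg hN₀ hμ hwbar hcond
  have hderivN : 0 < providerObjectiveDeriv N μ wbar N := by
    rwa [providerObjectiveDeriv_self hN₀.ne' hμ.ne', sub_pos]
  obtain ⟨y₀, hy₀, hpos⟩ := (hasDerivAt_providerObjective hN₀.ne' (by simpa using hμ.ne'))
    |>.exists_mem_Ioo_lt_of_pos hderivN hNb
  obtain ⟨ystar, hystar, hmax⟩ := exists_mem_Ioo_isMaxOn_Ico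
    ((continuousOn_providerObjective hN₀).mono (Icc_subset_Ico_right hbμ)) hbμ
    ⟨y₀, Ioo_subset_Icc_self hy₀, hpos⟩ fun y hy => hzero ▸ (hneg y hy).le
  have hcrit := providerObjectiveDeriv_eq_zero_of_isMaxOn hN₀.le hystar hmax
  refine ⟨ystar, hystar, hmax, fun z hz hzmax => ?_, sub_eq_zero.mp hcrit⟩
  have hz_int : z ∈ Ioo (N : ℝ) (N + μ) := by
    refine ⟨lt_of_le_of_ne hz.1 ?_, hz.2⟩
    rintro rfl
    exact (hzmax y₀ ⟨hy₀.1.le, hy₀.2.trans hbμ⟩).not_gt hpos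
  exact (strictAntiOn_providerObjectiveDeriv hN₀.le hwbar.le).injOn hz_int hystar
    ((providerObjectiveDeriv_eq_zero_of_isMaxOn hN₀.le hz_int hzmax).trans hcrit.symm)
end

section
/- (Asymptotic form of Theorem 1, the Nash equilibrium puzzle difficulty.) If 0 ≤ x n < α for all n ≥ 1 and (α − x n)³ * n² → γ with γ > 0, then the equilibrium puzzle difficulty r n = w_av/(1 + x n) − 1/((α − x n)² * n²) converges to w_av/(α + 1) as n → ∞; i.e., the Nash equilibrium difficulty satisfies k* · 2^(m*−1) = w_av/(α + 1) asymptotically. -/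
/-!
The constraint `(α - x n)³ n² → γ` forces the gap `α - x n` to vanish like `n^(-2/3)`, so
`x n → α` and the first term of `r n` tends to `w_av / (α + 1)`. The congestion term is
`1 / ((α - x n)² n²) = (α - x n) / ((α - x n)³ n²)`, a vanishing gap over a quantity tending
to `γ ≠ 0`, hence it tends to `0`.
-/

open Filter Topology

theorem tendsto_zero_of_tendsto_pow_zero {ι 𝕜 : Type*} [NormedDivisionRing 𝕜] {l : Filter ι}
    {f : ι → 𝕜} {n : ℕ} (hn : n ≠ 0) (h : Tendsto (fun i => f i ^ n) l (𝓝 0)) :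
    Tendsto f l (𝓝 0) := by
  rw [tendsto_zero_iff_norm_tendsto_zero] at h ⊢
  simp only [norm_pow] at h
  have hroot : Tendsto (fun t : ℝ => t ^ (n⁻¹ : ℝ)) (𝓝 0) (𝓝 0) := by
    simpa [Real.zero_rpow (inv_ne_zero (Nat.cast_ne_zero.2 hn))] using
      (Real.continuousAt_rpow_const 0 (n⁻¹ : ℝ) (Or.inr (by positivity))).tendsto
  exact (hroot.comp h).congr fun i => Real.pow_rpow_inv_natCast (norm_nonneg _) hn

theorem tendsto_zero_of_tendsto_mul_atTop {ι 𝕜 : Type*} [Field 𝕜] [LinearOrder 𝕜]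
    [IsStrictOrderedRing 𝕜] [TopologicalSpace 𝕜] [OrderTopology 𝕜] {l : Filter ι}
    {f g : ι → 𝕜} {c : 𝕜} (hfg : Tendsto (fun i => f i * g i) l (𝓝 c))
    (hg : Tendsto g l atTop) : Tendsto f l (𝓝 0) := by
  refine (hfg.div_atTop hg).congr' ?_
  filter_upwards [hg.eventually_ne_atTop 0] with i hi
  field_simp

theorem one_div_sq_mul_eq_div_pow_three_mul {K : Type*} [Field K] (d m : K) :
    1 / (d ^ 2 * m) = d / (d ^ 3 * m) := by
  rcases eq_or_ne d 0 with rfl | hd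
  · simp
  rcases eq_or_ne m 0 with rfl | hm
  · simp
  field_simp

theorem nash_equilibrium_difficulty_asymptotic_general
    (α γ wav : ℝ) (hα : 0 < α) (hγ : 0 < γ)
    (x : ℕ → ℝ)
    (hlim : Tendsto (fun n : ℕ => (α - x n) ^ 3 * (n : ℝ) ^ 2) atTop (nhds γ))
    (r : ℕ → ℝ)
    (hr : ∀ n : ℕ, r n = wav / (1 + x n) - 1 / ((α - x n) ^ 2 * (n : ℝ) ^ 2)) :
    Tendsto r atTop (nhds (wav / (α + 1))) := by
  have hcube : Tendsto (fun n => (α - x n) ^ 3) atTop (𝓝 0) :=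
    tendsto_zero_of_tendsto_mul_atTop hlim
      ((tendsto_pow_atTop two_ne_zero).comp tendsto_natCast_atTop_atTop)
  have hgap : Tendsto (fun n => α - x n) atTop (𝓝 0) :=
    tendsto_zero_of_tendsto_pow_zero three_ne_zero hcube
  have hxα : Tendsto x atTop (𝓝 α) := by
    simpa using (tendsto_const_nhds (x := α)).sub hgap
  have hvaluation : Tendsto (fun n => wav / (1 + x n)) atTop (𝓝 (wav / (α + 1))) := by
    rw [add_comm α]
    exact tendsto_const_nhds.div (tendsto_const_nhds.add hxα) (by linarith)
  have hcongestion :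
      Tendsto (fun n : ℕ => 1 / ((α - x n) ^ 2 * (n : ℝ) ^ 2)) atTop (𝓝 0) := by
    simp_rw [one_div_sq_mul_eq_div_pow_three_mul]
    rw [← zero_div γ]
    exact hgap.div hlim hγ.ne'
  simpa [funext hr] using hvaluation.sub hcongestion

/-- Asymptotic form of Theorem 1: the equilibrium puzzle difficulty
`r n = w_av/(1 + x n) - 1/((α - x n)² n²)` converges to `w_av/(α + 1)`. -/
theorem nash_equilibrium_difficulty_asymptotic
    (α γ wav : ℝ) (hα : 0 < α) (hγ : 0 < γ) (hwav : 0 < wav)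
    (x : ℕ → ℝ) (hx : ∀ n : ℕ, 1 ≤ n → 0 ≤ x n ∧ x n < α)
    (hlim : Tendsto (fun n : ℕ => (α - x n) ^ 3 * (n : ℝ) ^ 2) atTop (nhds γ))
    (r : ℕ → ℝ)
    (hr : ∀ n : ℕ, r n = wav / (1 + x n) - 1 / ((α - x n) ^ 2 * (n : ℝ) ^ 2)) :
    Tendsto r atTop (nhds (wav / (α + 1))) :=
  nash_equilibrium_difficulty_asymptotic_general α γ wav hα hγ x hlim r hr
end

section
/- If 0 ≤ x n < α for all n ≥ 1, (α − x n)³ * n² → γ with γ > 0, and for every n ≥ 1 the provider's asymptotic first-order condition w_av/(1 + x n)² = (α + x n)/((α − x n)³ * n²) holds, then necessarily γ = 2α(1 + α)²/w_av. -/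
open Filter Topology

/- The first-order condition, with denominators cleared, reads
`w_av (α - x n)³ n² = (α + x n)(1 + x n)²`. The left side tends to `w_av γ`; since
`(α - x n)³ = ((α - x n)³ n²) / n² → γ · 0`, we get `x n → α`, so the right side tends to
`2α(1 + α)²`. -/

theorem tendsto_nhds_zero_of_tendsto_pow {ι : Type*} {l : Filter ι} {f : ι → ℝ} {k : ℕ}
    (hk : k ≠ 0) (h : Tendsto (fun i => f i ^ k) l (𝓝 0)) : Tendsto f l (𝓝 0) := by
  rw [tendsto_zero_iff_abs_tendsto_zero]
  have habs : Tendsto (fun i => |f i| ^ k) l (𝓝 0) := by simpa [abs_pow] using h.abs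
  have hcont := Real.continuousAt_rpow_const 0 (k : ℝ)⁻¹ (Or.inr (by positivity))
  have hroot : Tendsto (fun i => (|f i| ^ k) ^ ((k : ℝ)⁻¹)) l (𝓝 0) := by
    rw [← Real.zero_rpow (by positivity : (k : ℝ)⁻¹ ≠ 0)]
    exact hcont.tendsto.comp habs
  exact hroot.congr fun i => Real.pow_rpow_inv_natCast (abs_nonneg _) hk

theorem tendsto_nhds_zero_of_tendsto_mul_pow {a : ℕ → ℝ} {γ : ℝ} {k : ℕ} (hk : k ≠ 0)
    (h : Tendsto (fun n : ℕ => a n * (n : ℝ) ^ k) atTop (𝓝 γ)) : Tendsto a atTop (𝓝 0) := by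
  have hprod := h.mul (tendsto_const_div_pow 1 k hk)
  rw [mul_zero] at hprod
  refine hprod.congr' ?_
  filter_upwards [eventually_ge_atTop 1] with n hn
  have hn' : (n : ℝ) ^ k ≠ 0 := pow_ne_zero k (by exact_mod_cast (Nat.one_le_iff_ne_zero.mp hn))
  field_simp

theorem gamma_determined_by_first_order_condition_general
    (α γ wav : ℝ) (hwav : 0 < wav)
    (x : ℕ → ℝ) (hx : ∀ n : ℕ, 1 ≤ n → 0 ≤ x n ∧ x n < α)
    (hlim : Tendsto (fun n : ℕ => (α - x n) ^ 3 * (n : ℝ) ^ 2) atTop (nhds γ))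
    (hfoc : ∀ n : ℕ, 1 ≤ n →
      wav / (1 + x n) ^ 2 = (α + x n) / ((α - x n) ^ 3 * (n : ℝ) ^ 2)) :
    γ = 2 * α * (1 + α) ^ 2 / wav := by
  have hgap := tendsto_nhds_zero_of_tendsto_pow three_ne_zero
    (tendsto_nhds_zero_of_tendsto_mul_pow two_ne_zero hlim)
  have hxlim : Tendsto x atTop (𝓝 α) := by
    simpa using (tendsto_const_nhds (x := α)).sub hgap
  have hcleared : ∀ᶠ n : ℕ in atTop,
      wav * ((α - x n) ^ 3 * (n : ℝ) ^ 2) = (α + x n) * (1 + x n) ^ 2 := by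
    filter_upwards [eventually_ge_atTop 1] with n hn
    obtain ⟨hx0, hxα⟩ := hx n hn
    have hn' : (0 : ℝ) < n := by exact_mod_cast hn
    have hD : 0 < (α - x n) ^ 3 * (n : ℝ) ^ 2 := by
      have : 0 < α - x n := sub_pos.2 hxα
      positivity
    have hfoc_n := hfoc n hn
    rw [div_eq_div_iff (by positivity) hD.ne'] at hfoc_n
    linarith
  have hrhs : Tendsto (fun n : ℕ => (α + x n) * (1 + x n) ^ 2) atTop
      (𝓝 (2 * α * (1 + α) ^ 2)) := by
    convert (tendsto_const_nhds.add hxlim).mul ((tendsto_const_nhds.add hxlim).pow 2) using 2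
    ring
  have hγ := tendsto_nhds_unique ((hlim.const_mul wav).congr' hcleared) hrhs
  rw [eq_div_iff hwav.ne']
  linarith

/-- If the provider's asymptotic first-order condition
`w_av/(1 + x n)² = (α + x n)/((α - x n)³ n²)` holds along the sequence, then the
limit `γ` of `(α - x n)³ n²` must equal `2α(1 + α)²/w_av`. -/
theorem gamma_determined_by_first_order_condition
    (α γ wav : ℝ) (hα : 0 < α) (hγ : 0 < γ) (hwav : 0 < wav)
    (x : ℕ → ℝ) (hx : ∀ n : ℕ, 1 ≤ n → 0 ≤ x n ∧ x n < α)
    (hlim : Tendsto (fun n : ℕ => (α - x n) ^ 3 * (n : ℝ) ^ 2) atTop (nhds γ))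
    (hfoc : ∀ n : ℕ, 1 ≤ n →
      wav / (1 + x n) ^ 2 = (α + x n) / ((α - x n) ^ 3 * (n : ℝ) ^ 2)) :
    γ = 2 * α * (1 + α) ^ 2 / wav :=
  gamma_determined_by_first_order_condition_general α γ wav hwav x hx hlim hfoc
end
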